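/- arXiv:2001.07517 — 7 statements merged into one kernel-verified Lean document; each statement's English description precedes it below -/
import Mathlib

section
/- For every integer m ≥ 1, real q with 0 ≤ q < 1, and reals α, β with |α| < π/2 and 0 ≤ β < 1, ∑_{n=2}^∞ (2n - cos α - β) C(n+m-2, m-1) q^{n-1} (1-q)^m = 2qm/(1-q) + (2 - cos α - β)(1 - (1-q)^m). -/
/-!
With `p_k = C(k + m - 1, m - 1) q^k (1 - q)^m` the Pascal distribution, the summand at `n` is
`(2k + (2 - cos α - β)) p_k` for `k = n + 1 ≥ 1`. The weights `p_k` sum to `1` and have mean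
`m q / (1 - q)`, both by the negative binomial series `∑ C(k + r, r) q^k = (1 - q)^{-(r+1)}`
(for the mean after `k C(k + r, r) = (r + 1) C(k + r, r + 1)`); dropping `k = 0` removes
`p_0 = (1 - q)^m` from the total mass.
-/

variable {𝕜 : Type*} [NormedField 𝕜]

/-- The Pascal distribution with the paper's parameter `m = r + 1`. -/
def pascalWeight (r : ℕ) (q : 𝕜) (k : ℕ) : 𝕜 :=
  ((k + r).choose r : 𝕜) * q ^ k * (1 - q) ^ (r + 1)

theorem one_sub_ne_zero_of_norm_lt_one {q : 𝕜} (hq : ‖q‖ < 1) : 1 - q ≠ 0 :=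
  sub_ne_zero.2 (by rintro rfl; simp at hq)

theorem Nat.mul_add_choose_eq_succ_mul_choose_succ (k r : ℕ) :
    k * (k + r).choose r = (r + 1) * (k + r).choose (r + 1) := by
  have h := Nat.choose_succ_right_eq (k + r) r
  rw [Nat.add_sub_cancel] at h
  linarith

theorem hasSum_pascalWeight (r : ℕ) {q : 𝕜} (hq : ‖q‖ < 1) : HasSum (pascalWeight r q) 1 := by
  have h := (hasSum_choose_mul_geometric_of_norm_lt_one r hq).mul_right ((1 - q) ^ (r + 1))
  rwa [one_div, inv_mul_cancel₀ (pow_ne_zero _ (one_sub_ne_zero_of_norm_lt_one hq))] at h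

theorem hasSum_nat_mul_pascalWeight (r : ℕ) {q : 𝕜} (hq : ‖q‖ < 1) :
    HasSum (fun k ↦ k * pascalWeight r q k) ((r + 1) * q / (1 - q)) := by
  have h := (hasSum_choose_mul_geometric_of_norm_lt_one (r + 1) hq).mul_left
    ((r + 1) * q * (1 - q) ^ (r + 1))
  rw [show (r + 1) * q * (1 - q) ^ (r + 1) * (1 / (1 - q) ^ (r + 1 + 1)) = (r + 1) * q / (1 - q) by
    field_simp [one_sub_ne_zero_of_norm_lt_one hq]; ring] at h
  refine (hasSum_nat_add_iff' 1).1 ?_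
  simp only [Finset.range_one, Finset.sum_singleton, Nat.cast_zero, zero_mul, sub_zero]
  refine h.congr_fun fun k ↦ ?_
  have hk := congrArg (Nat.cast (R := 𝕜)) (Nat.mul_add_choose_eq_succ_mul_choose_succ (k + 1) r)
  push_cast at hk ⊢
  rw [pascalWeight, ← mul_assoc, ← mul_assoc, hk, show k + 1 + r = k + (r + 1) by omega]
  ring

theorem hasSum_affine_mul_pascalWeight_succ (r : ℕ) {q : 𝕜} (hq : ‖q‖ < 1) (a b : 𝕜) :
    HasSum (fun n : ℕ ↦ (a * (n + 1) + b) * pascalWeight r q (n + 1))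
      (a * ((r + 1) * q / (1 - q)) + b * (1 - (1 - q) ^ (r + 1))) := by
  have h := ((hasSum_nat_mul_pascalWeight r hq).mul_left a).add
      ((hasSum_pascalWeight r hq).mul_left b)
  rw [mul_one] at h
  have hall : HasSum (fun k : ℕ ↦ (a * k + b) * pascalWeight r q k)
      (a * ((r + 1) * q / (1 - q)) + b) := h.congr_fun fun k ↦ by ring
  have hp0 : pascalWeight r q 0 = (1 - q) ^ (r + 1) := by simp [pascalWeight]
  have htail := (hasSum_nat_add_iff' 1).2 hall
  rw [Finset.sum_range_one, hp0, Nat.cast_zero, mul_zero, zero_add, add_sub_assoc,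
    ← mul_one_sub] at htail
  simpa only [Nat.cast_add_one] using htail

theorem pascal_TSP_sum_general (m : ℕ) (hm : 1 ≤ m) (q : ℝ) (hq0 : 0 ≤ q) (hq1 : q < 1)
    (α β : ℝ) :
    ∑' n : ℕ, (2 * ((n : ℝ) + 2) - Real.cos α - β) *
        (((n + 2) + m - 2).choose (m - 1) : ℝ) * q ^ (n + 1) * (1 - q) ^ m
      = 2 * q * m / (1 - q) + (2 - Real.cos α - β) * (1 - (1 - q) ^ m) := by
  obtain ⟨r, rfl⟩ : ∃ r, m = r + 1 := ⟨m - 1, by omega⟩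
  have hq : ‖q‖ < 1 := by rwa [Real.norm_of_nonneg hq0]
  convert (hasSum_affine_mul_pascalWeight_succ r hq 2 (2 - Real.cos α - β)).tsum_eq using 1
  · congr 1
    ext n
    rw [pascalWeight, show n + 2 + (r + 1) - 2 = n + 1 + r by omega, Nat.add_sub_cancel]
    ring
  · push_cast
    ring

theorem pascal_TSP_sum (m : ℕ) (hm : 1 ≤ m) (q : ℝ) (hq0 : 0 ≤ q) (hq1 : q < 1)
    (α β : ℝ) (hα : |α| < Real.pi / 2) (hβ0 : 0 ≤ β) (hβ1 : β < 1) :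
    ∑' n : ℕ, (2 * ((n : ℝ) + 2) - Real.cos α - β) *
        (((n + 2) + m - 2).choose (m - 1) : ℝ) * q ^ (n + 1) * (1 - q) ^ m
      = 2 * q * m / (1 - q) + (2 - Real.cos α - β) * (1 - (1 - q) ^ m) :=
  pascal_TSP_sum_general m hm q hq0 hq1 α β
end

section
/- Let |α| < π/2, 0 ≤ β < 1, m ≥ 1 an integer, and 0 ≤ q < 1. The function Φ_q^m(z) = z - ∑_{n=2}^∞ C(n+m-2, m-1) q^{n-1}(1-q)^m z^n satisfies the coefficient condition ∑_{n=2}^∞ (2n - cos α - β) C(n+m-2, m-1) q^{n-1}(1-q)^m ≤ cos α - β if and only if 2qm/(1-q) + (2 - cos α - β)(1 - (1-q)^m) ≤ cos α - β. -/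
/-!
Write `m = k + 1` and shift the index to `j = n + 1`. The coefficients
`C(j + k, k) q ^ j (1 - q) ^ (k + 1)` are the probabilities of the Pascal (negative binomial)
distribution: they sum to `1` and have mean `(k + 1) q / (1 - q)`. The weight
`2 (j + 1) - cos α - β` is affine in `j`, so over all `j ≥ 0` the series sums to
`2 (k + 1) q / (1 - q) + (2 - cos α - β)`; removing the missing term `j = 0`, which is
`(2 - cos α - β) (1 - q) ^ (k + 1)`, leaves exactly the left-hand side of the closed form.
-/

section PascalDistribution

variable {𝕜 : Type*} [NormedField 𝕜] {q : 𝕜}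

theorem Nat.mul_add_choose_eq (n k : ℕ) :
    n * (n + k).choose k = (k + 1) * (n + k).choose (k + 1) := by
  rw [Nat.mul_comm (k + 1), Nat.choose_succ_right_eq, Nat.add_sub_cancel, Nat.mul_comm]

theorem hasSum_mul_choose_mul_geometric (k : ℕ) (hq : ‖q‖ < 1) :
    HasSum (fun n : ℕ ↦ (n : 𝕜) * ((n + k).choose k * q ^ n))
      ((k + 1) * q / (1 - q) ^ (k + 2)) := by
  have hterm (n : ℕ) : ((n : 𝕜) + 1) * ((n + 1 + k).choose k * q ^ (n + 1)) =
      (k + 1) * q * ((n + k + 1).choose (k + 1) * q ^ n) := by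
    have := congrArg (Nat.cast : ℕ → 𝕜) (Nat.mul_add_choose_eq (n + 1) k)
    push_cast at this
    rw [Nat.add_right_comm] at this ⊢
    linear_combination q ^ (n + 1) * this
  rw [← hasSum_nat_add_iff' 1]
  simpa only [Nat.cast_add, Nat.cast_one, Finset.range_one, Finset.sum_singleton, Nat.cast_zero,
    zero_mul, sub_zero, hterm, ← add_assoc, mul_one_div] using
    (hasSum_choose_mul_geometric_of_norm_lt_one (k + 1) hq).mul_left ((k + 1) * q)

theorem hasSum_affine_mul_pascal (k : ℕ) (hq : ‖q‖ < 1) (a b : 𝕜) :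
    HasSum (fun n : ℕ ↦ (a * n + b) * ((n + k).choose k * q ^ n * (1 - q) ^ (k + 1)))
      (a * ((k + 1) * q / (1 - q)) + b) := by
  have hq' : (1 : 𝕜) - q ≠ 0 := sub_ne_zero.mpr (by rintro rfl; simp at hq)
  have hmean := ((hasSum_mul_choose_mul_geometric k hq).mul_left a).add
    ((hasSum_choose_mul_geometric_of_norm_lt_one k hq).mul_left b)
  have hvalue : a * ((k + 1) * q / (1 - q)) + b =
      (a * ((k + 1) * q / (1 - q) ^ (k + 2)) + b * (1 / (1 - q) ^ (k + 1))) * (1 - q) ^ (k + 1) := by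
    field_simp
    ring
  rw [hvalue]
  exact (hmean.mul_right _).congr_fun fun n ↦ by ring

theorem hasSum_affine_mul_pascal_tail (k : ℕ) (hq : ‖q‖ < 1) (a b : 𝕜) :
    HasSum (fun n : ℕ ↦ (a * (n + 1) + b) *
        ((n + 1 + k).choose k * q ^ (n + 1) * (1 - q) ^ (k + 1)))
      (a * ((k + 1) * q / (1 - q)) + b * (1 - (1 - q) ^ (k + 1))) := by
  rw [mul_one_sub, ← add_sub_assoc]
  simpa only [Nat.cast_add, Nat.cast_one, Finset.range_one, Finset.sum_singleton, Nat.cast_zero,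
    mul_zero, zero_add, Nat.choose_self, pow_zero, mul_one, one_mul] using
    (hasSum_nat_add_iff' 1).mpr (hasSum_affine_mul_pascal k hq a b)

end PascalDistribution

theorem Phi_mem_TSP_iff_general (m : ℕ) (hm : 1 ≤ m) (q : ℝ) (hq0 : 0 ≤ q) (hq1 : q < 1)
    (α β : ℝ) :
    (∑' n : ℕ, (2 * ((n : ℝ) + 2) - Real.cos α - β) *
        (((n + 2) + m - 2).choose (m - 1) : ℝ) * q ^ (n + 1) * (1 - q) ^ m
      ≤ Real.cos α - β)
    ↔ 2 * q * m / (1 - q) + (2 - Real.cos α - β) * (1 - (1 - q) ^ m) ≤ Real.cos α - β := by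
  obtain ⟨k, rfl⟩ := Nat.exists_eq_add_of_le' hm
  have hq : ‖q‖ < 1 := by rwa [Real.norm_of_nonneg hq0]
  have hterm (n : ℕ) : (2 * ((n : ℝ) + 2) - Real.cos α - β) *
        (((n + 2) + (k + 1) - 2).choose (k + 1 - 1) : ℝ) * q ^ (n + 1) * (1 - q) ^ (k + 1) =
      (2 * (n + 1) + (2 - Real.cos α - β)) *
        ((n + 1 + k).choose k * q ^ (n + 1) * (1 - q) ^ (k + 1)) := by
    rw [show n + 2 + (k + 1) - 2 = n + 1 + k by omega, Nat.add_sub_cancel]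
    ring
  rw [tsum_congr hterm, (hasSum_affine_mul_pascal_tail k hq 2 _).tsum_eq]
  push_cast
  rw [mul_div_assoc', ← mul_assoc, mul_right_comm (2 : ℝ)]

theorem Phi_mem_TSP_iff (m : ℕ) (hm : 1 ≤ m) (q : ℝ) (hq0 : 0 ≤ q) (hq1 : q < 1)
    (α β : ℝ) (hα : |α| < Real.pi / 2) (hβ0 : 0 ≤ β) (hβ1 : β < 1) :
    (∑' n : ℕ, (2 * ((n : ℝ) + 2) - Real.cos α - β) *
        (((n + 2) + m - 2).choose (m - 1) : ℝ) * q ^ (n + 1) * (1 - q) ^ m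
      ≤ Real.cos α - β)
    ↔ 2 * q * m / (1 - q) + (2 - Real.cos α - β) * (1 - (1 - q) ^ m) ≤ Real.cos α - β :=
  Phi_mem_TSP_iff_general m hm q hq0 hq1 α β
end

section
/- Let τ be a nonzero complex number, -1 ≤ B < A ≤ 1, m > 1 an integer, 0 < q < 1, |α| < π/2, 0 ≤ β < 1. Suppose f(z) = z + ∑_{n≥2} a_n z^n satisfies |a_n| ≤ (A-B)|τ|/n for all n ≥ 2. If (A-B)|τ|·[2(1-(1-q)^m) - ((cos α + β)/(q(m-1)))((1-q) - (1-q)^m - q(m-1)(1-q)^m)] ≤ cos α - β, then ∑_{n=2}^∞ (2n - cos α - β) C(n+m-2, m-1) q^{n-1}(1-q)^m |a_n| ≤ cos α - β. -/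
/-!
Bounding `|a_n|` by `(A - B)|τ|/n` dominates the series termwise by an explicit series in `q`.
Since `C(n+m-2, m-1)/n = C(n+m-2, m-2)/(m-1)`, that series splits into two tails of the negative
binomial series `∑ C(j+k, k) q^j = (1-q)^{-(k+1)}`, with `k = m-1` and `k = m-2`; summing them gives
exactly the left-hand side of the hypothesis on `(A - B)|τ|`.
-/

section ChooseGeometric

variable {𝕜 : Type*} [NormedDivisionRing 𝕜] {r : 𝕜}

lemma hasSum_choose_mul_geometric_nat_add_one (k : ℕ) (hr : ‖r‖ < 1) :
    HasSum (fun n : ℕ => ((n + 1 + k).choose k : 𝕜) * r ^ (n + 1))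
      (1 / (1 - r) ^ (k + 1) - 1) := by
  have := (hasSum_nat_add_iff' (f := fun n : ℕ => ((n + k).choose k : 𝕜) * r ^ n) 1).2
    (hasSum_choose_mul_geometric_of_norm_lt_one k hr)
  simpa using this

lemma hasSum_choose_mul_geometric_nat_add_two (k : ℕ) (hr : ‖r‖ < 1) :
    HasSum (fun n : ℕ => ((n + 2 + k).choose k : 𝕜) * r ^ (n + 2))
      (1 / (1 - r) ^ (k + 1) - 1 - (k + 1) * r) := by
  have := (hasSum_nat_add_iff' (f := fun n : ℕ => ((n + k).choose k : 𝕜) * r ^ n) 2).2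
    (hasSum_choose_mul_geometric_of_norm_lt_one k hr)
  simpa [Finset.sum_range_succ, add_comm 1 k, sub_sub] using this

end ChooseGeometric

lemma Nat.choose_add_succ_succ_mul (n k : ℕ) :
    (n + k + 1).choose (k + 1) * (k + 1) = (n + k + 1).choose k * (n + 1) := by
  simpa [show n + k + 1 - k = n + 1 by omega] using Nat.choose_succ_right_eq (n + k + 1) k

lemma hasSum_pascal_majorant {m : ℕ} (hm : 1 < m) {q : ℝ} (hq0 : 0 < q)
    (hq1 : q < 1) (c K : ℝ) :
    HasSum (fun n : ℕ => (2 * ((n : ℝ) + 2) - c) *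
        (((n + 2) + m - 2).choose (m - 1) : ℝ) * q ^ (n + 1) * (1 - q) ^ m * (K / ((n : ℝ) + 2)))
      (K * (2 * (1 - (1 - q) ^ m)
          - (c / (q * ((m : ℝ) - 1))) *
              ((1 - q) - (1 - q) ^ m - q * ((m : ℝ) - 1) * (1 - q) ^ m))) := by
  obtain ⟨k, rfl⟩ : ∃ k, m = k + 2 := ⟨m - 2, by omega⟩
  have hr : ‖q‖ < 1 := by rwa [Real.norm_of_nonneg hq0.le]
  have hsum := (((hasSum_choose_mul_geometric_nat_add_one (k + 1) hr).mul_left 2).sub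
    ((hasSum_choose_mul_geometric_nat_add_two k hr).mul_left (c / ((k + 1) * q)))).mul_left
      (K * (1 - q) ^ (k + 2))
  have hval : K * (1 - q) ^ (k + 2) * (2 * (1 / (1 - q) ^ (k + 1 + 1) - 1)
      - c / ((k + 1) * q) * (1 / (1 - q) ^ (k + 1) - 1 - (k + 1) * q))
      = K * (2 * (1 - (1 - q) ^ (k + 2)) - c / (q * (((k + 2 : ℕ) : ℝ) - 1))
        * ((1 - q) - (1 - q) ^ (k + 2) - q * (((k + 2 : ℕ) : ℝ) - 1) * (1 - q) ^ (k + 2))) := by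
    have : 1 - q ≠ 0 := by linarith
    push_cast
    rw [show (k : ℝ) + 2 - 1 = k + 1 by ring]
    field_simp
    ring
  rw [← hval]
  refine hsum.congr_fun fun n => ?_
  have hC : (((n + 1 + (k + 1)).choose (k + 1) : ℕ) : ℝ) * (k + 1) =
      ((n + 2 + k).choose k : ℕ) * (n + 2) := by
    rw [show n + 1 + (k + 1) = n + 1 + k + 1 by ring, show n + 2 + k = n + 1 + k + 1 by ring]
    exact_mod_cast Nat.choose_add_succ_succ_mul (n + 1) k
  rw [show n + 2 + (k + 2) - 2 = n + 1 + (k + 1) by omega, show k + 2 - 1 = k + 1 by omega]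
  field_simp
  linear_combination (-(K * (1 - q) ^ (k + 2) * q ^ (n + 2) * c)) * hC

theorem inclusion_RtauAB_TSP_general (τ : ℂ) (A B : ℝ)
    (m : ℕ) (hm : 1 < m) (q : ℝ) (hq0 : 0 < q) (hq1 : q < 1)
    (α β : ℝ) (hβ1 : β < 1)
    (a : ℕ → ℂ) (ha : ∀ n, 2 ≤ n → ‖a n‖ ≤ (A - B) * ‖τ‖ / n)
    (hcond : (A - B) * ‖τ‖ *
        (2 * (1 - (1 - q) ^ m)
          - ((Real.cos α + β) / (q * ((m : ℝ) - 1))) *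
              ((1 - q) - (1 - q) ^ m - q * ((m : ℝ) - 1) * (1 - q) ^ m))
      ≤ Real.cos α - β) :
    ∑' n : ℕ, (2 * ((n : ℝ) + 2) - Real.cos α - β) *
        (((n + 2) + m - 2).choose (m - 1) : ℝ) * q ^ (n + 1) * (1 - q) ^ m *
        ‖a (n + 2)‖
      ≤ Real.cos α - β := by
  have hmaj := hasSum_pascal_majorant hm hq0 hq1 (Real.cos α + β) ((A - B) * ‖τ‖)
  simp only [← sub_sub] at hmaj
  have hcoeff (n : ℕ) : 0 ≤ (2 * ((n : ℝ) + 2) - Real.cos α - β) *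
      (((n + 2) + m - 2).choose (m - 1) : ℝ) * q ^ (n + 1) * (1 - q) ^ m := by
    have : 0 ≤ 2 * ((n : ℝ) + 2) - Real.cos α - β := by
      linarith [Real.cos_le_one α, (n.cast_nonneg : (0 : ℝ) ≤ n)]
    have : 0 ≤ 1 - q := by linarith
    positivity
  have hnorm (n : ℕ) : ‖a (n + 2)‖ ≤ (A - B) * ‖τ‖ / ((n : ℝ) + 2) := by
    simpa using ha (n + 2) (by omega)
  have hle (n : ℕ) := mul_le_mul_of_nonneg_left (hnorm n) (hcoeff n)
  have hsummable := Summable.of_nonneg_of_le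
    (fun n => mul_nonneg (hcoeff n) (norm_nonneg _)) hle hmaj.summable
  exact (hasSum_le hle hsummable.hasSum hmaj).trans hcond

theorem inclusion_RtauAB_TSP (τ : ℂ) (hτ : τ ≠ 0) (A B : ℝ) (hB : -1 ≤ B) (hBA : B < A) (hA : A ≤ 1)
    (m : ℕ) (hm : 1 < m) (q : ℝ) (hq0 : 0 < q) (hq1 : q < 1)
    (α β : ℝ) (hα : |α| < Real.pi / 2) (hβ0 : 0 ≤ β) (hβ1 : β < 1)
    (a : ℕ → ℂ) (ha : ∀ n, 2 ≤ n → ‖a n‖ ≤ (A - B) * ‖τ‖ / n)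
    (hcond : (A - B) * ‖τ‖ *
        (2 * (1 - (1 - q) ^ m)
          - ((Real.cos α + β) / (q * ((m : ℝ) - 1))) *
              ((1 - q) - (1 - q) ^ m - q * ((m : ℝ) - 1) * (1 - q) ^ m))
      ≤ Real.cos α - β) :
    ∑' n : ℕ, (2 * ((n : ℝ) + 2) - Real.cos α - β) *
        (((n + 2) + m - 2).choose (m - 1) : ℝ) * q ^ (n + 1) * (1 - q) ^ m *
        ‖a (n + 2)‖
      ≤ Real.cos α - β :=
  inclusion_RtauAB_TSP_general τ A B m hm q hq0 hq1 α β hβ1 a ha hcond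
end

section
/- Let τ ≠ 0, -1 ≤ B < A ≤ 1, m ≥ 1 an integer, 0 ≤ q < 1, |α| < π/2, 0 ≤ β < 1. Suppose |a_n| ≤ (A-B)|τ|/n for all n ≥ 2. If (A-B)|τ|·(2qm/(1-q) + (2 - cos α - β)(1 - (1-q)^m)) ≤ cos α - β, then ∑_{n=2}^∞ n(2n - cos α - β) C(n+m-2, m-1) q^{n-1}(1-q)^m |a_n| ≤ cos α - β. -/
/-!
Write `m = r + 1` and `j = n - 1`. Then `C(n+m-2, m-1) q^(n-1) (1-q)^m = C(j+r, r) q^j (1-q)^(r+1)`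
is the negative binomial distribution with parameters `r + 1` and `q`, of total mass `1` and mean
`(r+1) q/(1-q)`. The coefficient bound cancels the factor `n` of each term, leaving at most
`(A-B)|τ|` times the expectation of `2j + (2 - cos α - β)` over `j ≥ 1`, which is exactly the
left-hand side of the hypothesis.
-/

section NegativeBinomial

variable {𝕜 : Type*} [NormedField 𝕜]

def negBinomialWeight (r : ℕ) (q : 𝕜) (j : ℕ) : 𝕜 :=
  (j + r).choose r * q ^ j * (1 - q) ^ (r + 1)

theorem negBinomialWeight_zero (r : ℕ) (q : 𝕜) :
    negBinomialWeight r q 0 = (1 - q) ^ (r + 1) := by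
  simp [negBinomialWeight]

theorem negBinomialWeight_nonneg (r : ℕ) {q : ℝ} (hq0 : 0 ≤ q) (hq1 : q ≤ 1) (j : ℕ) :
    0 ≤ negBinomialWeight r q j := by
  have : 0 ≤ 1 - q := by linarith
  unfold negBinomialWeight
  positivity

theorem succ_mul_negBinomialWeight_succ (r : ℕ) {q : 𝕜} (hq : q ≠ 1) (j : ℕ) :
    (j + 1) * negBinomialWeight r q (j + 1) =
      (r + 1) * q / (1 - q) * negBinomialWeight (r + 1) q j := by
  have hq' : 1 - q ≠ 0 := sub_ne_zero.mpr hq.symm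
  have hchoose : (j + 1) * (j + 1 + r).choose r = (r + 1) * (j + 1 + r).choose (r + 1) := by
    have h := Nat.choose_succ_right_eq (j + 1 + r) r
    rw [Nat.add_sub_cancel] at h
    linarith
  have hchoose' := congrArg (Nat.cast : ℕ → 𝕜) hchoose
  push_cast at hchoose'
  unfold negBinomialWeight
  rw [show j + (r + 1) = j + 1 + r by ring]
  field_simp
  linear_combination q ^ (j + 1) * (1 - q) ^ (r + 1) * (1 - q) * hchoose'

theorem hasSum_negBinomialWeight (r : ℕ) {q : 𝕜} (hq : ‖q‖ < 1) :
    HasSum (negBinomialWeight r q) 1 := by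
  have hq' : 1 - q ≠ 0 := sub_ne_zero.mpr (by rintro rfl; simp at hq)
  have h := (hasSum_choose_mul_geometric_of_norm_lt_one r hq).mul_right ((1 - q) ^ (r + 1))
  rwa [one_div, inv_mul_cancel₀ (pow_ne_zero _ hq')] at h

theorem hasSum_natCast_mul_negBinomialWeight (r : ℕ) {q : 𝕜} (hq : ‖q‖ < 1) :
    HasSum (fun j ↦ j * negBinomialWeight r q j) ((r + 1) * q / (1 - q)) := by
  have hq1 : q ≠ 1 := by rintro rfl; simp at hq
  rw [← hasSum_nat_add_iff' 1]
  simpa [succ_mul_negBinomialWeight_succ r hq1] using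
    (hasSum_negBinomialWeight (r + 1) hq).mul_left ((r + 1) * q / (1 - q))

theorem hasSum_affine_mul_negBinomialWeight_succ (r : ℕ) {q : 𝕜} (hq : ‖q‖ < 1)
    (s t : 𝕜) :
    HasSum (fun j : ℕ ↦ (s * (j + 1) + t) * negBinomialWeight r q (j + 1))
      (s * ((r + 1) * q / (1 - q)) + t * (1 - (1 - q) ^ (r + 1))) := by
  have htotal : HasSum (fun j : ℕ ↦ (s * j + t) * negBinomialWeight r q j)
      (s * ((r + 1) * q / (1 - q)) + t) := by
    simpa [add_mul, mul_assoc] using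
      ((hasSum_natCast_mul_negBinomialWeight r hq).mul_left s).add
        ((hasSum_negBinomialWeight r hq).mul_left t)
  rw [mul_sub, mul_one, ← add_sub_assoc]
  simpa [negBinomialWeight_zero] using (hasSum_nat_add_iff' 1).mpr htotal

end NegativeBinomial

theorem tsum_mul_mul_le_of_le_div {g b N : ℕ → ℝ} {G K : ℝ} (hg0 : ∀ n, 0 ≤ g n)
    (hg : HasSum g G) (hN : ∀ n, 0 < N n) (hb0 : ∀ n, 0 ≤ b n) (hb : ∀ n, b n ≤ K / N n) :
    ∑' n, N n * g n * b n ≤ K * G := by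
  have h0 : ∀ n, 0 ≤ N n * g n * b n := fun n ↦
    mul_nonneg (mul_nonneg (hN n).le (hg0 n)) (hb0 n)
  have hle : ∀ n, N n * g n * b n ≤ K * g n := fun n ↦
    calc N n * g n * b n ≤ N n * g n * (K / N n) :=
          mul_le_mul_of_nonneg_left (hb n) (mul_nonneg (hN n).le (hg0 n))
      _ = K * g n := by field_simp [(hN n).ne']
  exact hasSum_le hle (Summable.of_nonneg_of_le h0 hle (hg.mul_left K).summable).hasSum
    (hg.mul_left K)

theorem inclusion_RtauAB_UCT_general (τ : ℂ) (A B : ℝ)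
    (m : ℕ) (hm : 1 ≤ m) (q : ℝ) (hq0 : 0 ≤ q) (hq1 : q < 1)
    (α β : ℝ) (hβ1 : β < 1)
    (a : ℕ → ℂ) (ha : ∀ n, 2 ≤ n → ‖a n‖ ≤ (A - B) * ‖τ‖ / n)
    (hcond : (A - B) * ‖τ‖ *
        (2 * q * m / (1 - q) + (2 - Real.cos α - β) * (1 - (1 - q) ^ m))
      ≤ Real.cos α - β) :
    ∑' n : ℕ, ((n : ℝ) + 2) * (2 * ((n : ℝ) + 2) - Real.cos α - β) *
        (((n + 2) + m - 2).choose (m - 1) : ℝ) * q ^ (n + 1) * (1 - q) ^ m *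
        ‖a (n + 2)‖
      ≤ Real.cos α - β := by
  obtain ⟨r, rfl⟩ := Nat.exists_eq_add_of_le' hm
  have hq : ‖q‖ < 1 := by rwa [Real.norm_of_nonneg hq0]
  have hc : 0 ≤ 2 - Real.cos α - β := by linarith [Real.cos_le_one α]
  calc _ = ∑' n : ℕ, ((n : ℝ) + 2) *
          ((2 * (n + 1) + (2 - Real.cos α - β)) * negBinomialWeight r q (n + 1)) *
          ‖a (n + 2)‖ := by
        refine tsum_congr fun n ↦ ?_
        rw [negBinomialWeight, show n + 2 + (r + 1) - 2 = n + 1 + r by omega, Nat.add_sub_cancel]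
        ring
    _ ≤ (A - B) * ‖τ‖ *
          (2 * ((r + 1) * q / (1 - q)) + (2 - Real.cos α - β) * (1 - (1 - q) ^ (r + 1))) :=
        tsum_mul_mul_le_of_le_div
          (fun n ↦ mul_nonneg (by positivity) (negBinomialWeight_nonneg r hq0 hq1.le _))
          (hasSum_affine_mul_negBinomialWeight_succ r hq 2 _) (fun n ↦ by positivity)
          (fun n ↦ norm_nonneg _) (fun n ↦ by exact_mod_cast ha (n + 2) (by omega))
    _ ≤ Real.cos α - β := by
        rw [Nat.cast_succ] at hcond
        convert hcond using 3
        ring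

theorem inclusion_RtauAB_UCT (τ : ℂ) (hτ : τ ≠ 0) (A B : ℝ) (hB : -1 ≤ B) (hBA : B < A) (hA : A ≤ 1)
    (m : ℕ) (hm : 1 ≤ m) (q : ℝ) (hq0 : 0 ≤ q) (hq1 : q < 1)
    (α β : ℝ) (hα : |α| < Real.pi / 2) (hβ0 : 0 ≤ β) (hβ1 : β < 1)
    (a : ℕ → ℂ) (ha : ∀ n, 2 ≤ n → ‖a n‖ ≤ (A - B) * ‖τ‖ / n)
    (hcond : (A - B) * ‖τ‖ *
        (2 * q * m / (1 - q) + (2 - Real.cos α - β) * (1 - (1 - q) ^ m))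
      ≤ Real.cos α - β) :
    ∑' n : ℕ, ((n : ℝ) + 2) * (2 * ((n : ℝ) + 2) - Real.cos α - β) *
        (((n + 2) + m - 2).choose (m - 1) : ℝ) * q ^ (n + 1) * (1 - q) ^ m *
        ‖a (n + 2)‖
      ≤ Real.cos α - β :=
  inclusion_RtauAB_UCT_general τ A B m hm q hq0 hq1 α β hβ1 a ha hcond
end

section
/- Let m ≥ 1 be an integer, 0 ≤ q < 1, |α| < π/2, 0 ≤ β < 1. Define G_q^m(z) = z - ∑_{n=2}^∞ C(n+m-2, m-1) q^{n-1}(1-q)^m z^n/n. Then ∑_{n=2}^∞ n(2n - cos α - β)·(coefficient of z^n in z - G_q^m) ≤ cos α - β if and only if 2qm/(1-q) + (2 - cos α - β)(1 - (1-q)^m) ≤ cos α - β. -/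
/-!
Since `n · [zⁿ](z - G_q^m) = (1-q)^m C(n+m-2, m-1) q^(n-1)` are negative-binomial weights, the series
on the left sums in closed form: `∑_{j ≥ 0} C(j+k, k) r^j = (1-r)^(-k-1)` and, via
`(j+1) C(j+1+k, k) = (k+1) C(j+1+k, k+1)`, also its `j`-weighted version. The sum is exactly
`2qm/(1-q) + (2 - cos α - β)(1 - (1-q)^m)`, so the two inequalities coincide.
-/

section GeometricChoose

variable {𝕜 : Type*} [NormedField 𝕜] {r : 𝕜}

theorem hasSum_choose_mul_geometric_succ (k : ℕ) (hr : ‖r‖ < 1) :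
    HasSum (fun n : ℕ ↦ ((n + 1 + k).choose k : 𝕜) * r ^ (n + 1))
      (1 / (1 - r) ^ (k + 1) - 1) := by
  have h := hasSum_choose_mul_geometric_of_norm_lt_one k hr
  rw [← hasSum_nat_add_iff' 1] at h
  simpa using h

theorem hasSum_succ_mul_choose_mul_geometric_succ (k : ℕ) (hr : ‖r‖ < 1) :
    HasSum (fun n : ℕ ↦ ((n : 𝕜) + 1) * (n + 1 + k).choose k * r ^ (n + 1))
      ((k + 1) * r / (1 - r) ^ (k + 2)) := by
  have h := (hasSum_choose_mul_geometric_of_norm_lt_one (k + 1) hr).mul_left ((k + 1) * r)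
  rw [mul_one_div] at h
  refine h.congr_fun fun n ↦ ?_
  have hchoose : (n + 1 + k).choose (k + 1) * (k + 1) = (n + 1 + k).choose k * (n + 1) := by
    rw [Nat.choose_succ_right_eq, Nat.add_sub_cancel]
  have hcast := congrArg (Nat.cast : ℕ → 𝕜) hchoose
  push_cast at hcast
  rw [show n + (k + 1) = n + 1 + k by omega]
  linear_combination r ^ (n + 1) * hcast.symm

end GeometricChoose

theorem hasSum_weighted_coeff (m : ℕ) (hm : 1 ≤ m) {q : ℝ} (hq : |q| < 1) (γ β : ℝ) :
    HasSum (fun n : ℕ ↦ ((n : ℝ) + 2) * (2 * ((n : ℝ) + 2) - γ - β) *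
        ((((n + 2) + m - 2).choose (m - 1) : ℝ) * q ^ (n + 1) * (1 - q) ^ m / ((n : ℝ) + 2)))
      (2 * q * m / (1 - q) + (2 - γ - β) * (1 - (1 - q) ^ m)) := by
  obtain ⟨k, rfl⟩ : ∃ k, m = k + 1 := ⟨m - 1, by omega⟩
  have hq' : ‖q‖ < 1 := by rwa [Real.norm_eq_abs]
  have hsub : 1 - q ≠ 0 := by linarith [le_abs_self q]
  -- `2(n + 2) - γ - β = 2(n + 1) + (2 - γ - β)` splits the series into two standard ones.
  have h := (((hasSum_succ_mul_choose_mul_geometric_succ k hq').mul_left 2).add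
    ((hasSum_choose_mul_geometric_succ k hq').mul_left (2 - γ - β))).mul_left ((1 - q) ^ (k + 1))
  have hvalue : 2 * q * ((k + 1 : ℕ) : ℝ) / (1 - q) + (2 - γ - β) * (1 - (1 - q) ^ (k + 1)) =
      (1 - q) ^ (k + 1) * (2 * ((k + 1) * q / (1 - q) ^ (k + 2)) +
        (2 - γ - β) * (1 / (1 - q) ^ (k + 1) - 1)) := by
    push_cast
    field_simp
    ring
  rw [hvalue]
  refine h.congr_fun fun n ↦ ?_
  rw [show n + 2 + (k + 1) - 2 = n + 1 + k by omega, Nat.add_sub_cancel]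
  field_simp
  ring

theorem G_mem_UCT_iff_general (m : ℕ) (hm : 1 ≤ m) (q : ℝ) (hq0 : 0 ≤ q) (hq1 : q < 1)
    (α β : ℝ) :
    (∑' n : ℕ, ((n : ℝ) + 2) * (2 * ((n : ℝ) + 2) - Real.cos α - β) *
        ((((n + 2) + m - 2).choose (m - 1) : ℝ) * q ^ (n + 1) * (1 - q) ^ m / ((n : ℝ) + 2))
      ≤ Real.cos α - β)
    ↔ 2 * q * m / (1 - q) + (2 - Real.cos α - β) * (1 - (1 - q) ^ m) ≤ Real.cos α - β :=
  (hasSum_weighted_coeff m hm (abs_lt.2 ⟨by linarith, hq1⟩) _ _).tsum_eq ▸ Iff.rfl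

theorem G_mem_UCT_iff (m : ℕ) (hm : 1 ≤ m) (q : ℝ) (hq0 : 0 ≤ q) (hq1 : q < 1)
    (α β : ℝ) (hα : |α| < Real.pi / 2) (hβ0 : 0 ≤ β) (hβ1 : β < 1) :
    (∑' n : ℕ, ((n : ℝ) + 2) * (2 * ((n : ℝ) + 2) - Real.cos α - β) *
        ((((n + 2) + m - 2).choose (m - 1) : ℝ) * q ^ (n + 1) * (1 - q) ^ m / ((n : ℝ) + 2))
      ≤ Real.cos α - β)
    ↔ 2 * q * m / (1 - q) + (2 - Real.cos α - β) * (1 - (1 - q) ^ m) ≤ Real.cos α - β :=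
  G_mem_UCT_iff_general m hm q hq0 hq1 α β
end

section
/- Let m > 1 be an integer, 0 < q < 1, |α| < π/2, 0 ≤ β < 1. Then ∑_{n=2}^∞ (2n - cos α - β) C(n+m-2, m-1) q^{n-1}(1-q)^m / n ≤ cos α - β if and only if 2(1 - (1-q)^m) - ((cos α + β)/(q(m-1)))·((1-q) - (1-q)^m - q(m-1)(1-q)^m) ≤ cos α - β. -/
/-! The series sums to the left-hand side of the closed-form inequality. With `m = k + 2`, the identity
`C(n+m, m-1) / (n+2) = C(n+m, m-2) / (m-1)` writes the `n`-th term as a combination of the terms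
of the negative binomial series `∑ C(j+m-1, m-1) q^j = (1-q)^(-m)` and
`∑ C(j+m-2, m-2) q^j = (1-q)^(-(m-1))`, with their first one, resp. two, terms removed. -/

section

variable {𝕜 : Type*}

theorem hasSum_choose_mul_geometric_tail_one [NormedDivisionRing 𝕜] (k : ℕ) {r : 𝕜} (hr : ‖r‖ < 1) :
    HasSum (fun n ↦ ((n + 1 + k).choose k : 𝕜) * r ^ (n + 1)) (1 / (1 - r) ^ (k + 1) - 1) := by
  have h := (hasSum_nat_add_iff' (f := fun n ↦ ((n + k).choose k : 𝕜) * r ^ n) 1).mpr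
    (hasSum_choose_mul_geometric_of_norm_lt_one k hr)
  simpa using h

theorem hasSum_choose_mul_geometric_tail_two [NormedDivisionRing 𝕜] (k : ℕ) {r : 𝕜} (hr : ‖r‖ < 1) :
    HasSum (fun n ↦ ((n + 2 + k).choose k : 𝕜) * r ^ (n + 2))
      (1 / (1 - r) ^ (k + 1) - 1 - (k + 1) * r) := by
  have h := (hasSum_nat_add_iff' (f := fun n ↦ ((n + k).choose k : 𝕜) * r ^ n) 2).mpr
    (hasSum_choose_mul_geometric_of_norm_lt_one k hr)
  have hchoose : ((1 + k).choose k : 𝕜) = k + 1 := by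
    rw [Nat.add_comm, Nat.choose_succ_self_right]; push_cast; rfl
  simpa [Finset.sum_range_succ, hchoose, sub_sub] using h

theorem G_coeff_split [Field 𝕜] [CharZero 𝕜] (k n : ℕ) {q : 𝕜} (hq : q ≠ 0) (c P : 𝕜) :
    (2 * ((n : 𝕜) + 2) - c) * (((n + 2) + (k + 2) - 2).choose (k + 2 - 1) : 𝕜) * q ^ (n + 1) * P
        / ((n : 𝕜) + 2)
      = 2 * P * (((n + 1 + (k + 1)).choose (k + 1) : 𝕜) * q ^ (n + 1))
        - c * P / (q * ((k : 𝕜) + 1)) * (((n + 2 + k).choose k : 𝕜) * q ^ (n + 2)) := by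
  have hchoose : ((n + k + 2).choose (k + 1) : 𝕜) * ((k : 𝕜) + 1)
      = ((n + k + 2).choose k : 𝕜) * ((n : 𝕜) + 2) := by
    have h := Nat.choose_succ_right_eq (n + k + 2) k
    rw [show n + k + 2 - k = n + 2 by omega] at h
    exact_mod_cast h
  rw [show n + 2 + (k + 2) - 2 = n + k + 2 by omega, show n + 1 + (k + 1) = n + k + 2 by omega,
    show n + 2 + k = n + k + 2 by omega, show k + 2 - 1 = k + 1 by omega]
  have hn : (n : 𝕜) + 2 ≠ 0 := by exact_mod_cast (n + 1).succ_ne_zero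
  have hk : (k : 𝕜) + 1 ≠ 0 := by exact_mod_cast k.succ_ne_zero
  field_simp
  linear_combination -c * q ^ (n + 2) * P * hchoose

theorem hasSum_G_series [NormedField 𝕜] [CharZero 𝕜] {m : ℕ} (hm : 1 < m) {q : 𝕜}
    (hq0 : q ≠ 0) (hq1 : ‖q‖ < 1) (c : 𝕜) :
    HasSum (fun n : ℕ ↦ (2 * ((n : 𝕜) + 2) - c) *
        (((n + 2) + m - 2).choose (m - 1) : 𝕜) * q ^ (n + 1) * (1 - q) ^ m / ((n : 𝕜) + 2))
      (2 * (1 - (1 - q) ^ m)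
        - (c / (q * ((m : 𝕜) - 1))) * ((1 - q) - (1 - q) ^ m - q * ((m : 𝕜) - 1) * (1 - q) ^ m)) := by
  obtain ⟨k, rfl⟩ : ∃ k, m = k + 2 := ⟨m - 2, by omega⟩
  have h := ((hasSum_choose_mul_geometric_tail_one (k + 1) hq1).mul_left (2 * (1 - q) ^ (k + 2))).sub
    ((hasSum_choose_mul_geometric_tail_two k hq1).mul_left
      (c * (1 - q) ^ (k + 2) / (q * ((k : 𝕜) + 1))))
  simp only [← G_coeff_split k _ hq0] at h
  convert h using 1
  · rfl
  have h1q : 1 - q ≠ 0 := sub_ne_zero.mpr fun h1 ↦ by simp [← h1] at hq1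
  have hk : (k : 𝕜) + 1 ≠ 0 := by exact_mod_cast k.succ_ne_zero
  rw [show ((k + 2 : ℕ) : 𝕜) - 1 = k + 1 by push_cast; ring]
  field_simp
  ring

end

theorem G_mem_TSP_iff_general (m : ℕ) (hm : 1 < m) (q : ℝ) (hq0 : 0 < q) (hq1 : q < 1)
    (α β : ℝ) :
    (∑' n : ℕ, (2 * ((n : ℝ) + 2) - Real.cos α - β) *
        (((n + 2) + m - 2).choose (m - 1) : ℝ) * q ^ (n + 1) * (1 - q) ^ m / ((n : ℝ) + 2)
      ≤ Real.cos α - β)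
    ↔ 2 * (1 - (1 - q) ^ m)
        - ((Real.cos α + β) / (q * ((m : ℝ) - 1))) *
            ((1 - q) - (1 - q) ^ m - q * ((m : ℝ) - 1) * (1 - q) ^ m)
      ≤ Real.cos α - β := by
  have hq : ‖q‖ < 1 := by rwa [Real.norm_of_nonneg hq0.le]
  simp only [sub_sub _ (Real.cos α) β]
  rw [(hasSum_G_series hm hq0.ne' hq _).tsum_eq]

theorem G_mem_TSP_iff (m : ℕ) (hm : 1 < m) (q : ℝ) (hq0 : 0 < q) (hq1 : q < 1)
    (α β : ℝ) (hα : |α| < Real.pi / 2) (hβ0 : 0 ≤ β) (hβ1 : β < 1) :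
    (∑' n : ℕ, (2 * ((n : ℝ) + 2) - Real.cos α - β) *
        (((n + 2) + m - 2).choose (m - 1) : ℝ) * q ^ (n + 1) * (1 - q) ^ m / ((n : ℝ) + 2)
      ≤ Real.cos α - β)
    ↔ 2 * (1 - (1 - q) ^ m)
        - ((Real.cos α + β) / (q * ((m : ℝ) - 1))) *
            ((1 - q) - (1 - q) ^ m - q * ((m : ℝ) - 1) * (1 - q) ^ m)
      ≤ Real.cos α - β :=
  G_mem_TSP_iff_general m hm q hq0 hq1 α β
end

section
/- Let |α| < π/2, m ≥ 1 an integer, and 0 ≤ q < 1. Then ∑_{n=2}^∞ n(2n - cos α) C(n+m-2, m-1) q^{n-1}(1-q)^m ≤ cos α if and only if 2q²m(m+1)/(1-q)² + (6 - cos α)·qm/(1-q) + (2 - cos α)(1 - (1-q)^m) ≤ cos α. -/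
/-!
With `k = n - 1` the series is `∑_{k ≥ 1} (k + 1)(2k + 2 - cos α) p_k`, where
`p_k = C(k + m - 1, m - 1) q^k (1 - q)^m` are the Pascal (negative binomial) weights. Their
factorial moments are explicit: `∑ k^(j) p_k = (m + j - 1)^(j) (q / (1 - q))^j`, because
`k^(j) C(k + m - 1, m - 1) = (m + j - 1)^(j) C(k + m - 1, m - 1 + j)` turns each moment back
into a binomial series. Writing `(k + 1)(2k + 2 - c) = 2 k^(2) + (6 - c) k^(1) + (2 - c)` and
removing the `k = 0` term `(2 - c)(1 - q)^m` evaluates the series to exactly the left-hand side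
of the stated inequality, so the two inequalities coincide.
-/

open Finset

theorem Nat.descFactorial_mul_choose_add (n k j : ℕ) :
    n.descFactorial j * (n + k).choose k = (k + j).descFactorial j * (n + k).choose (k + j) := by
  have h := Nat.choose_mul (n := n + k) (k := k + j) (s := k) (by omega)
  rw [Nat.add_sub_cancel, Nat.add_sub_cancel_left, Nat.choose_symm_add] at h
  rw [descFactorial_eq_factorial_mul_choose, descFactorial_eq_factorial_mul_choose, mul_assoc,
    mul_assoc, mul_comm (n.choose j), ← h, mul_comm ((k + j).choose j)]

section GeometricMoments

variable {𝕜 : Type*} [NormedField 𝕜] {r : 𝕜}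

theorem hasSum_choose_add_mul_geometric (hr : ‖r‖ < 1) (k j : ℕ) :
    HasSum (fun n ↦ ((n + k).choose (k + j) : 𝕜) * r ^ n) (r ^ j / (1 - r) ^ (k + j + 1)) := by
  rw [← hasSum_nat_add_iff' j]
  have hvanish : ∑ i ∈ range j, ((i + k).choose (k + j) : 𝕜) * r ^ i = 0 :=
    sum_eq_zero fun i hi ↦ by
      rw [Nat.choose_eq_zero_of_lt (by simp only [mem_range] at hi; omega)]; simp
  rw [hvanish, sub_zero, div_eq_mul_one_div]
  refine ((hasSum_choose_mul_geometric_of_norm_lt_one (k + j) hr).mul_left (r ^ j)).congr_fun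
    fun n ↦ ?_
  rw [show n + j + k = n + (k + j) by ring, pow_add]
  ring

theorem hasSum_descFactorial_mul_choose_mul_geometric (hr : ‖r‖ < 1) (k j : ℕ) :
    HasSum (fun n ↦ (n.descFactorial j * (n + k).choose k : 𝕜) * r ^ n)
      ((k + j).descFactorial j * r ^ j / (1 - r) ^ (k + j + 1)) := by
  simp_rw [← Nat.cast_mul, Nat.descFactorial_mul_choose_add, Nat.cast_mul, mul_assoc,
    mul_div_assoc]
  exact (hasSum_choose_add_mul_geometric hr k j).mul_left _

theorem hasSum_quadratic_mul_choose_mul_geometric (hr : ‖r‖ < 1) (k : ℕ) (c : 𝕜) :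
    HasSum (fun n : ℕ ↦ ((n : 𝕜) + 1) * (2 * ((n : 𝕜) + 1) - c) * (n + k).choose k * r ^ n)
      (2 * ((k : 𝕜) + 1) * (k + 2) * r ^ 2 / (1 - r) ^ (k + 3)
        + (6 - c) * (k + 1) * r / (1 - r) ^ (k + 2) + (2 - c) / (1 - r) ^ (k + 1)) := by
  have h2 := (hasSum_descFactorial_mul_choose_mul_geometric hr k 2).mul_left 2
  have h1 := (hasSum_descFactorial_mul_choose_mul_geometric hr k 1).mul_left (6 - c)
  have h0 := (hasSum_descFactorial_mul_choose_mul_geometric hr k 0).mul_left (2 - c)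
  simp only [Nat.cast_descFactorial_two, Nat.descFactorial_one, Nat.descFactorial_zero]
    at h2 h1 h0
  push_cast at h2 h1 h0
  convert ((h2.add h1).add h0).congr_fun fun n ↦ ?_ using 1
  · rfl
  · ring
  · ring

theorem hasSum_pascal_coeff_series (hr : ‖r‖ < 1) {m : ℕ} (hm : 1 ≤ m) (c : 𝕜) :
    HasSum (fun n : ℕ ↦ ((n : 𝕜) + 2) * (2 * ((n : 𝕜) + 2) - c) *
        (((n + 2) + m - 2).choose (m - 1) : 𝕜) * r ^ (n + 1) * (1 - r) ^ m)
      (2 * r ^ 2 * m * (m + 1) / (1 - r) ^ 2 + (6 - c) * (r * m / (1 - r))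
        + (2 - c) * (1 - (1 - r) ^ m)) := by
  obtain ⟨k, rfl⟩ : ∃ k, m = k + 1 := ⟨m - 1, by omega⟩
  have hr1 : 1 - r ≠ 0 := sub_ne_zero.mpr fun h ↦ by simp [← h] at hr
  have h := (hasSum_quadratic_mul_choose_mul_geometric hr k c).mul_right ((1 - r) ^ (k + 1))
  rw [← hasSum_nat_add_iff' 1] at h
  convert h using 1
  · rfl
  · ext n
    rw [show n + 2 + (k + 1) - 2 = n + 1 + k by omega, Nat.add_sub_cancel]
    push_cast
    ring
  · simp only [Nat.cast_add, Nat.cast_one, range_one, sum_singleton, Nat.cast_zero, zero_add,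
      mul_one, one_mul, Nat.choose_self, pow_zero]
    field_simp
    ring

end GeometricMoments

theorem Phi_mem_UCT_alpha_iff_general (m : ℕ) (hm : 1 ≤ m) (q : ℝ) (hq0 : 0 ≤ q) (hq1 : q < 1)
    (α : ℝ) :
    (∑' n : ℕ, ((n : ℝ) + 2) * (2 * ((n : ℝ) + 2) - Real.cos α) *
        (((n + 2) + m - 2).choose (m - 1) : ℝ) * q ^ (n + 1) * (1 - q) ^ m
      ≤ Real.cos α)
    ↔ 2 * q ^ 2 * m * (m + 1) / (1 - q) ^ 2 + (6 - Real.cos α) * (q * m / (1 - q))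
        + (2 - Real.cos α) * (1 - (1 - q) ^ m) ≤ Real.cos α := by
  have hq : ‖q‖ < 1 := by rwa [Real.norm_of_nonneg hq0]
  rw [(hasSum_pascal_coeff_series hq hm (Real.cos α)).tsum_eq]

theorem Phi_mem_UCT_alpha_iff (m : ℕ) (hm : 1 ≤ m) (q : ℝ) (hq0 : 0 ≤ q) (hq1 : q < 1)
    (α : ℝ) (hα : |α| < Real.pi / 2) :
    (∑' n : ℕ, ((n : ℝ) + 2) * (2 * ((n : ℝ) + 2) - Real.cos α) *
        (((n + 2) + m - 2).choose (m - 1) : ℝ) * q ^ (n + 1) * (1 - q) ^ m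
      ≤ Real.cos α)
    ↔ 2 * q ^ 2 * m * (m + 1) / (1 - q) ^ 2 + (6 - Real.cos α) * (q * m / (1 - q))
        + (2 - Real.cos α) * (1 - (1 - q) ^ m) ≤ Real.cos α :=
  Phi_mem_UCT_alpha_iff_general m hm q hq0 hq1 α
end
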